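/- arXiv:1605.04496 — 3 statements merged into one kernel-verified Lean document; each statement's English description precedes it below -/
import Mathlib

section
/- Let f : X → Y be a continuous closed surjective map between metric spaces with compact fibers (a perfect map), let A, B ⊆ X be disjoint closed sets, let K ⊆ Y be compact, and let g₀ : X → M be a continuous map into a metric space M such that g₀(A ∩ f⁻¹(y)) ∩ g₀(B ∩ f⁻¹(y)) = ∅ for every y ∈ K. Then there exist ε > 0 and an open set W ⊆ Y containing K such that any continuous g : X → M with ρ(g(x), g₀(x)) < ε for all x ∈ X satisfies g(A ∩ f⁻¹(y)) ∩ g(B ∩ f⁻¹(y)) = ∅ for every y ∈ W. -/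
theorem stability_of_fiberwise_disjointness {X Y M : Type*}
    [MetricSpace X] [MetricSpace Y] [MetricSpace M]
    (f : X → Y) (hf : Continuous f) (hfc : IsClosedMap f)
    (hfs : Function.Surjective f) (hfib : ∀ y : Y, IsCompact (f ⁻¹' {y}))
    (A B : Set X) (hA : IsClosed A) (hB : IsClosed B) (hAB : Disjoint A B)
    (K : Set Y) (hK : IsCompact K)
    (g₀ : X → M) (hg₀ : Continuous g₀)
    (hdisj : ∀ y ∈ K, (g₀ '' (A ∩ f ⁻¹' {y})) ∩ (g₀ '' (B ∩ f ⁻¹' {y})) = ∅) :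
    ∃ ε > (0 : ℝ), ∃ W : Set Y, IsOpen W ∧ K ⊆ W ∧
      ∀ g : X → M, Continuous g → (∀ x, dist (g x) (g₀ x) < ε) →
        ∀ y ∈ W, (g '' (A ∩ f ⁻¹' {y})) ∩ (g '' (B ∩ f ⁻¹' {y})) = ∅ := by
  -- Key pointwise claim
  have key : ∀ y ∈ K, ∃ ε > (0:ℝ), ∃ V : Set Y, IsOpen V ∧ y ∈ V ∧
      ∀ y' ∈ V, ∀ a ∈ A ∩ f ⁻¹' {y'}, ∀ b ∈ B ∩ f ⁻¹' {y'},
        2 * ε ≤ dist (g₀ a) (g₀ b) := by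
    intro y hy
    set S : Set M := g₀ '' (A ∩ f ⁻¹' {y}) with hS
    set T : Set M := g₀ '' (B ∩ f ⁻¹' {y}) with hT
    have hScomp : IsCompact S := (((hfib y).inter_left hA).image hg₀)
    have hTcomp : IsCompact T := (((hfib y).inter_left hB).image hg₀)
    have hST : Disjoint S T := Set.disjoint_iff_inter_eq_empty.mpr (hdisj y hy)
    obtain ⟨δ, hδ, hthick⟩ := hST.exists_thickenings hScomp hTcomp.isClosed
    -- open sets in X
    set UA : Set X := g₀ ⁻¹' (Metric.thickening (δ/2) S) \ B with hUA
    set UB : Set X := g₀ ⁻¹' (Metric.thickening (δ/2) T) \ A with hUB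
    have hUAopen : IsOpen UA :=
      ((Metric.isOpen_thickening.preimage hg₀).sdiff hB)
    have hUBopen : IsOpen UB :=
      ((Metric.isOpen_thickening.preimage hg₀).sdiff hA)
    set U : Set X := UA ∪ UB ∪ (A ∪ B)ᶜ with hU
    have hUopen : IsOpen U := (hUAopen.union hUBopen).union (hA.union hB).isOpen_compl
    have hfiber : f ⁻¹' {y} ⊆ U := by
      intro x hx
      by_cases hxA : x ∈ A
      · refine Set.mem_union_left _ (Set.mem_union_left _ ⟨?_, fun hxB => hAB.le_bot ⟨hxA, hxB⟩⟩)
        exact Set.mem_preimage.mpr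
          (Metric.self_subset_thickening (by linarith) S ⟨x, ⟨hxA, hx⟩, rfl⟩)
      by_cases hxB : x ∈ B
      · refine Set.mem_union_left _ (Set.mem_union_right _ ⟨?_, hxA⟩)
        exact Set.mem_preimage.mpr
          (Metric.self_subset_thickening (by linarith) T ⟨x, ⟨hxB, hx⟩, rfl⟩)
      · exact Set.mem_union_right _ (by simp [hxA, hxB])
    -- closed map: get open V around y with f ⁻¹' V ⊆ U
    have hclosed : IsClosed (f '' Uᶜ) := hfc _ hUopen.isClosed_compl
    set V : Set Y := (f '' Uᶜ)ᶜ with hV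
    have hVopen : IsOpen V := hclosed.isOpen_compl
    have hyV : y ∈ V := by
      intro ⟨x, hxU, hxy⟩
      exact hxU (hfiber (by simp [hxy]))
    have hVsub : f ⁻¹' V ⊆ U := by
      intro x hx
      by_contra hxU
      exact hx ⟨x, hxU, rfl⟩
    refine ⟨δ/4, by linarith, V, hVopen, hyV, ?_⟩
    intro y' hy' a ⟨haA, haf⟩ b ⟨hbB, hbf⟩
    have haU : a ∈ UA := by
      have h0 := hVsub (show f a ∈ V by rwa [Set.mem_singleton_iff.mp haf])
      rcases (Set.mem_union _ _ _).mp h0 with h | h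
      · rcases (Set.mem_union _ _ _).mp h with h | h
        · exact h
        · exact absurd haA h.2
      · exact absurd (Set.mem_union_left _ haA) h
    have hbU : b ∈ UB := by
      have h0 := hVsub (show f b ∈ V by rwa [Set.mem_singleton_iff.mp hbf])
      rcases (Set.mem_union _ _ _).mp h0 with h | h
      · rcases (Set.mem_union _ _ _).mp h with h | h
        · exact absurd hbB h.2
        · exact h
      · exact absurd (Set.mem_union_right _ hbB) h
    -- distance estimate
    obtain ⟨p, hpS, hpa⟩ := Metric.mem_thickening_iff.mp haU.1
    have hbnot : g₀ b ∉ Metric.thickening δ S := by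
      intro h
      exact (hthick.le_bot ⟨h, Metric.thickening_mono (by linarith) T hbU.1⟩)
    have hbp : δ ≤ dist (g₀ b) p := by
      by_contra h
      exact hbnot (Metric.mem_thickening_iff.mpr ⟨p, hpS, by linarith⟩)
    have := dist_triangle (g₀ b) (g₀ a) p
    have h1 : dist (g₀ a) p + dist (g₀ a) (g₀ b) ≥ δ := by
      rw [dist_comm (g₀ a) (g₀ b)]
      linarith
    linarith
  -- extract neighborhoods and cover K
  choose! ε hε V hVopen hyV hVest using key
  obtain ⟨t, htK, htcover⟩ := hK.elim_nhds_subcover V (fun y hy => (hVopen y hy).mem_nhds (hyV y hy))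
  by_cases ht : t.Nonempty
  · refine ⟨t.inf' ht ε, ?_, ⋃ y ∈ t, V y, ?_, htcover, ?_⟩
    · obtain ⟨y, hy, hyeq⟩ := t.exists_mem_eq_inf' ht ε
      rw [hyeq]; exact hε y (htK y hy)
    · exact isOpen_biUnion fun y hy => hVopen y (htK y hy)
    · intro g hg hgd y hyW
      rw [Set.eq_empty_iff_forall_notMem]
      rintro m ⟨⟨a, ha, rfl⟩, b, hb, hab⟩
      obtain ⟨y₀, hy₀t, hy₀V⟩ := Set.mem_iUnion₂.mp hyW
      have hest := hVest y₀ (htK y₀ hy₀t) y hy₀V a ha b hb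
      have hεle : t.inf' ht ε ≤ ε y₀ := Finset.inf'_le ε hy₀t
      have h1 := hgd a
      have h2 := hgd b
      rw [dist_comm] at h1
      have h3 : dist (g₀ a) (g₀ b) ≤ dist (g₀ a) (g a) + dist (g b) (g₀ b) := by
        calc dist (g₀ a) (g₀ b) ≤ dist (g₀ a) (g b) + dist (g b) (g₀ b) := dist_triangle _ _ _
          _ = dist (g₀ a) (g a) + dist (g b) (g₀ b) := by rw [hab]
      linarith
  · refine ⟨1, one_pos, ∅, isOpen_empty, ?_, by simp⟩
    rw [Finset.not_nonempty_iff_eq_empty] at ht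
    simpa [ht] using htcover
end

section
/- Let f : X → Y be a continuous closed map between metrizable spaces. Then the set { x ∈ X : f⁻¹(f(x)) = {x} } of points at which f is one-to-one is a Gδ subset of X. -/
/-! For `n : ℕ`, the points whose fibre lies in some ball of radius `1 / (n + 1)` form an open
set: if the fibre of `x` lies in an open set `W`, then so does every fibre over the open
neighbourhood `(f '' Wᶜ)ᶜ` of `f x`, because `f` is closed. The intersection of these open
sets consists of the points with a one-point fibre. -/

open Metric

theorem IsClosedMap.isOpen_setOf_preimage_singleton_subset {X Y : Type*} [TopologicalSpace X]
    [TopologicalSpace Y] {f : X → Y} (hf : Continuous f) (hfc : IsClosedMap f) {W : Set X}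
    (hW : IsOpen W) : IsOpen {x | f ⁻¹' {f x} ⊆ W} := by
  have : {x | f ⁻¹' {f x} ⊆ W} = f ⁻¹' (f '' Wᶜ)ᶜ := by
    ext x
    simp [Set.subset_def, not_imp_comm]
  rw [this]
  exact (hfc _ hW.isClosed_compl).isOpen_compl.preimage hf

theorem Metric.eq_singleton_iff_forall_nat_subset_ball {X : Type*} [MetricSpace X] {S : Set X}
    {x : X} (hx : x ∈ S) : S = {x} ↔ ∀ n : ℕ, ∃ y, S ⊆ ball y (1 / (n + 1)) := by
  refine ⟨fun hS n => ⟨x, hS ▸ Set.singleton_subset_iff.2 (mem_ball_self Nat.one_div_pos_of_nat)⟩,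
    fun h => (Set.subsingleton_iff_singleton hx).1 fun a ha b hb => ?_⟩
  refine eq_of_forall_dist_le fun ε hε => ?_
  obtain ⟨n, hn⟩ := exists_nat_one_div_lt (half_pos hε)
  obtain ⟨y, hSy⟩ := h n
  calc dist a b ≤ dist a y + dist y b := dist_triangle a y b
    _ ≤ ε / 2 + ε / 2 := by
        gcongr
        · exact (mem_ball.1 (hSy ha)).le.trans hn.le
        · exact (mem_ball'.1 (hSy hb)).le.trans hn.le
    _ = ε := add_halves ε

theorem isGdelta_injectivity_points_general {X Y : Type*} [TopologicalSpace X]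
    [TopologicalSpace Y] [TopologicalSpace.MetrizableSpace X]
    (f : X → Y) (hf : Continuous f) (hfc : IsClosedMap f) :
    IsGδ {x : X | f ⁻¹' {f x} = {x}} := by
  let _ : MetricSpace X := TopologicalSpace.metrizableSpaceMetric X
  have hpoints : {x : X | f ⁻¹' {f x} = {x}} =
      ⋂ n : ℕ, ⋃ y : X, {x | f ⁻¹' {f x} ⊆ ball y (1 / (n + 1))} := by
    ext x
    simpa only [Set.mem_iInter, Set.mem_iUnion, Set.mem_ofPred_eq] using
      eq_singleton_iff_forall_nat_subset_ball (S := f ⁻¹' {f x}) rfl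
  rw [hpoints]
  exact .iInter fun n => (isOpen_iUnion fun y =>
    hfc.isOpen_setOf_preimage_singleton_subset hf isOpen_ball).isGδ

theorem isGdelta_injectivity_points {X Y : Type*} [TopologicalSpace X]
    [TopologicalSpace Y] [TopologicalSpace.MetrizableSpace X] [TopologicalSpace.MetrizableSpace Y]
    (f : X → Y) (hf : Continuous f) (hfc : IsClosedMap f) :
    IsGδ {x : X | f ⁻¹' {f x} = {x}} :=
  isGdelta_injectivity_points_general f hf hfc
end

section
/- Let X, Y be metric spaces, f : X → Y a perfect surjection, M a metric space, and A, B ⊆ X disjoint closed sets. For y ∈ Y let C_y(X, M; A, B) = { g ∈ C(X, M) : g(A ∩ f⁻¹(y)) ∩ g(B ∩ f⁻¹(y)) = ∅ }. Then for any compact subset P ⊆ C(X, M) (with the compact-open topology) and any y₀ ∈ Y with P ⊆ C_{y₀}(X, M; A, B), there is a neighborhood V of y₀ in Y such that P ⊆ C_y(X, M; A, B) for all y ∈ V. -/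
open Filter Topology Set

theorem compact_family_stability {X Y M : Type*}
    [MetricSpace X] [MetricSpace Y] [MetricSpace M]
    (f : X → Y) (hf : Continuous f) (hfc : IsClosedMap f)
    (hfs : Function.Surjective f) (hfib : ∀ y : Y, IsCompact (f ⁻¹' {y}))
    (A B : Set X) (hA : IsClosed A) (hB : IsClosed B) (hAB : Disjoint A B)
    (P : Set C(X, M)) (hP : IsCompact P) (y₀ : Y)
    (hP₀ : ∀ g ∈ P, (⇑g '' (A ∩ f ⁻¹' {y₀})) ∩ (⇑g '' (B ∩ f ⁻¹' {y₀})) = ∅) :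
    ∃ V ∈ nhds y₀, ∀ y ∈ V, ∀ g ∈ P,
      (⇑g '' (A ∩ f ⁻¹' {y})) ∩ (⇑g '' (B ∩ f ⁻¹' {y})) = ∅ := by
  by_contra hcon
  push_neg at hcon
  -- Extract a bad sequence
  have hbad : ∀ n : ℕ, ∃ y : Y, dist y y₀ < 1 / (n + 1) ∧ ∃ g ∈ P, ∃ a ∈ A, ∃ b ∈ B,
      f a = y ∧ f b = y ∧ g a = g b := by
    intro n
    obtain ⟨y, hyV, g, hgP, hne⟩ := hcon (Metric.ball y₀ (1 / (n + 1)))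
      (Metric.ball_mem_nhds _ (by positivity))
    obtain ⟨m, ⟨a, ⟨haA, hay⟩, hga⟩, ⟨b, ⟨hbB, hby⟩, hgb⟩⟩ := hne
    exact ⟨y, by simpa [Metric.mem_ball] using hyV, g, hgP, a, haA, b, hbB,
      hay, hby, hga.trans hgb.symm⟩
  choose y hy g hgP a haA b hbB hfa hfb hgab using hbad
  -- y n → y₀
  have hyconv : Tendsto y atTop (𝓝 y₀) := by
    rw [tendsto_iff_dist_tendsto_zero]
    refine squeeze_zero (fun n => dist_nonneg) (fun n => (hy n).le) ?_
    exact tendsto_one_div_add_atTop_nhds_zero_nat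
  -- the compact set containing all the a n, b n
  have hL : IsCompact (insert y₀ (Set.range y)) := hyconv.isCompact_insert_range
  have hproper : IsProperMap f :=
    isProperMap_iff_isClosedMap_and_compact_fibers.mpr ⟨hf, hfc, hfib⟩
  have hK : IsCompact (f ⁻¹' insert y₀ (Set.range y)) := hproper.isCompact_preimage hL
  set K := f ⁻¹' insert y₀ (Set.range y) with hKdef
  have haK : ∀ n, a n ∈ K := fun n => by
    simp only [hKdef, Set.mem_preimage, hfa n]; exact Set.mem_insert_of_mem _ ⟨n, rfl⟩
  have hbK : ∀ n, b n ∈ K := fun n => by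
    simp only [hKdef, Set.mem_preimage, hfb n]; exact Set.mem_insert_of_mem _ ⟨n, rfl⟩
  -- extract convergent subsequences
  obtain ⟨a₀, ha₀K, φ, hφ, haconv⟩ := hK.tendsto_subseq haK
  obtain ⟨b₀, hb₀K, ψ, hψ, hbconv⟩ := hK.tendsto_subseq (fun n => hbK (φ n))
  set σ : ℕ → ℕ := φ ∘ ψ with hσdef
  have hσ : StrictMono σ := hφ.comp hψ
  have haconv' : Tendsto (fun n => a (σ n)) atTop (𝓝 a₀) :=
    haconv.comp hψ.tendsto_atTop
  have hbconv' : Tendsto (fun n => b (σ n)) atTop (𝓝 b₀) := hbconv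
  -- limits on the base
  have hyσ : Tendsto (fun n => y (σ n)) atTop (𝓝 y₀) := hyconv.comp hσ.tendsto_atTop
  have hfa₀ : f a₀ = y₀ := by
    have h1 : Tendsto (fun n => f (a (σ n))) atTop (𝓝 (f a₀)) :=
      (hf.tendsto a₀).comp haconv'
    have h2 : (fun n => f (a (σ n))) = fun n => y (σ n) := funext fun n => hfa (σ n)
    rw [h2] at h1
    exact tendsto_nhds_unique h1 hyσ
  have hfb₀ : f b₀ = y₀ := by
    have h1 : Tendsto (fun n => f (b (σ n))) atTop (𝓝 (f b₀)) :=
      (hf.tendsto b₀).comp hbconv'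
    have h2 : (fun n => f (b (σ n))) = fun n => y (σ n) := funext fun n => hfb (σ n)
    rw [h2] at h1
    exact tendsto_nhds_unique h1 hyσ
  have ha₀A : a₀ ∈ A := hA.mem_of_tendsto haconv' (Eventually.of_forall fun n => haA (σ n))
  have hb₀B : b₀ ∈ B := hB.mem_of_tendsto hbconv' (Eventually.of_forall fun n => hbB (σ n))
  -- cluster point of the maps via an ultrafilter
  let U : Ultrafilter ℕ := Ultrafilter.of atTop
  have hUle : (U : Filter ℕ) ≤ atTop := Ultrafilter.of_le atTop
  have hgU : (Ultrafilter.map (fun n => g (σ n)) U : Filter C(X, M)) ≤ 𝓟 P := by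
    rw [Ultrafilter.coe_map]
    exact le_principal_iff.mpr (mem_map.mpr (univ_mem' fun n => hgP (σ n)))
  obtain ⟨g₀, hg₀P, hg₀conv⟩ := hP.ultrafilter_le_nhds _ hgU
  have hgtend : Tendsto (fun n => g (σ n)) (U : Filter ℕ) (𝓝 g₀) := hg₀conv
  -- uniform convergence on the compact K
  have huniform : TendstoUniformlyOn (fun n x => g (σ n) x) g₀ (U : Filter ℕ) K :=
    (ContinuousMap.tendsto_iff_forall_isCompact_tendstoUniformlyOn.mp hgtend) K hK
  have haU : Tendsto (fun n => a (σ n)) (U : Filter ℕ) (𝓝[K] a₀) := by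
    rw [tendsto_nhdsWithin_iff]
    exact ⟨haconv'.mono_left hUle, Eventually.of_forall fun n => haK (σ n)⟩
  have hbU : Tendsto (fun n => b (σ n)) (U : Filter ℕ) (𝓝[K] b₀) := by
    rw [tendsto_nhdsWithin_iff]
    exact ⟨hbconv'.mono_left hUle, Eventually.of_forall fun n => hbK (σ n)⟩
  have h1 : Tendsto (fun n => g (σ n) (a (σ n))) (U : Filter ℕ) (𝓝 (g₀ a₀)) :=
    huniform.tendsto_comp (g₀.continuous.continuousWithinAt) haU
  have h2 : Tendsto (fun n => g (σ n) (b (σ n))) (U : Filter ℕ) (𝓝 (g₀ b₀)) :=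
    huniform.tendsto_comp (g₀.continuous.continuousWithinAt) hbU
  have heq : (fun n => g (σ n) (a (σ n))) = fun n => g (σ n) (b (σ n)) :=
    funext fun n => hgab (σ n)
  rw [heq] at h1
  have : g₀ a₀ = g₀ b₀ := tendsto_nhds_unique h1 h2
  have : g₀ a₀ ∈ (⇑g₀ '' (A ∩ f ⁻¹' {y₀})) ∩ (⇑g₀ '' (B ∩ f ⁻¹' {y₀})) :=
    ⟨⟨a₀, ⟨ha₀A, by simp [hfa₀]⟩, rfl⟩, ⟨b₀, ⟨hb₀B, by simp [hfb₀]⟩, this.symm ▸ rfl⟩⟩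
  rw [hP₀ g₀ hg₀P] at this
  exact this
end
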